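/- arXiv:2104.05593 — 2 statements merged into one kernel-verified Lean document; each statement's English description precedes it below -/
import Mathlib

section
/- For the gap-sum S(n) of the sequence a(n) = C(n+2,3), we have S(n) = 5*C(n+3,4) + 10*C(n+3,5). -/
/-!
The terms of the gap-sum are the integers strictly between `c = a n` and `c' = a (n + 1)`, so
twice the sum is `(c' - c - 1) * (c + c')`. By Pascal's rule the gap `c' - c` is `(n + 2).choose 2`,
and what remains is a polynomial identity in `n`, checked over `ℚ` after writing each binomial
coefficient as a falling factorial divided by a factorial.
-/

open Finset

theorem two_mul_sum_Icc_add (c m : ℕ) :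
    2 * ∑ j ∈ Icc 1 m, (c + j) = m * (2 * c + m + 1) := by
  induction m with
  | zero => simp
  | succ m ih => rw [sum_Icc_succ_top (by omega), mul_add, ih]; ring

theorem two_mul_sum_strictly_between (c c' : ℕ) :
    2 * ∑ j ∈ Icc 1 (c' - c - 1), (c + j) = (c' - c - 1) * (c + c') := by
  rcases Nat.lt_or_ge c c' with hlt | hle
  · obtain ⟨m, rfl⟩ := Nat.exists_eq_add_of_lt hlt
    rw [show c + m + 1 - c - 1 = m by omega, two_mul_sum_Icc_add]
    ring
  · simp [Nat.sub_eq_zero_of_le hle]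

theorem Nat.choose_succ_sub_choose (n k : ℕ) :
    (n + 1).choose (k + 1) - n.choose (k + 1) = n.choose k := by
  rw [Nat.choose_succ_succ', Nat.add_sub_cancel]

theorem tetrahedral_gap_sum_identity (n : ℕ) :
    ((n + 3).choose 3 - (n + 2).choose 3 - 1) * ((n + 2).choose 3 + (n + 3).choose 3)
      = 2 * (5 * (n + 3).choose 4 + 10 * (n + 3).choose 5) := by
  rw [Nat.choose_succ_sub_choose]
  have hpos : 1 ≤ (n + 2).choose 2 := Nat.choose_pos (by omega)
  qify [hpos]
  simp only [Nat.cast_choose_eq_descPochhammer_div, descPochhammer_succ_eval, descPochhammer_zero,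
    Polynomial.eval_one, Nat.factorial]
  push_cast
  ring

theorem gap_sum_tetrahedral_binomial (a : ℕ → ℕ) (ha : ∀ n, a n = Nat.choose (n + 2) 3)
    (S : ℕ → ℕ)
    (hS : ∀ n, S n = ∑ j ∈ Finset.Icc 1 (a (n + 1) - a n - 1), (a n + j)) :
    ∀ n, S n = 5 * Nat.choose (n + 3) 4 + 10 * Nat.choose (n + 3) 5 := by
  intro n
  have h := two_mul_sum_strictly_between (a n) (a (n + 1))
  rw [← hS, ha, ha, tetrahedral_gap_sum_identity] at h
  omega
end

section
/- For the gap-sum S(n) of the sequence a(n) = C(n+3,4), we have S(n) = 9*C(n+4,5) + 36*C(n+4,6) + 34*C(n+4,7) + C(n+3,7). -/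
/-!
`S n` is the sum of the integers strictly between `a n` and `a (n + 1)`, that is
`C(a (n + 1), 2) - C(a n + 1, 2)`. With `a n = C(n + 3, 4)` the claim becomes a polynomial identity
of degree 8 in `n`, checked over `ℚ` by expanding every binomial coefficient as a falling factorial.
-/

open Finset

theorem sum_Icc_add_add_choose_two (a t : ℕ) :
    ∑ j ∈ Icc 1 t, (a + j) + (a + 1).choose 2 = (a + t + 1).choose 2 := by
  induction t with
  | zero => simp
  | succ t ih =>
    have pascal : (a + t + 2).choose 2 = (a + t + 1).choose 1 + (a + t + 1).choose 2 :=
      Nat.choose_succ_succ' (a + t + 1) 1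
    rw [sum_Icc_succ_top (by omega), add_right_comm, ih, show a + (t + 1) + 1 = a + t + 2 by ring,
      pascal, Nat.choose_one_right]
    ring

theorem sum_Icc_sub_sub_one_add_add_choose_two {a b : ℕ} (hab : a < b) :
    ∑ j ∈ Icc 1 (b - a - 1), (a + j) + (a + 1).choose 2 = b.choose 2 := by
  rw [sum_Icc_add_add_choose_two, show a + (b - a - 1) + 1 = b by omega]

theorem choose_four_lt_choose_four_succ (n : ℕ) : (n + 3).choose 4 < (n + 4).choose 4 := by
  have hpos : 0 < (n + 3).choose 3 := Nat.choose_pos (by omega)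
  have pascal : (n + 4).choose 4 = (n + 3).choose 3 + (n + 3).choose 4 :=
    Nat.choose_succ_succ' (n + 3) 3
  omega

theorem choose_two_choose_four_succ (n : ℕ) :
    ((n + 4).choose 4).choose 2 = ((n + 3).choose 4 + 1).choose 2 +
      (9 * (n + 4).choose 5 + 36 * (n + 4).choose 6 + 34 * (n + 4).choose 7 + (n + 3).choose 7) := by
  apply Nat.cast_injective (R := ℚ)
  push_cast
  rw [Nat.cast_choose_two, Nat.cast_choose_two]
  simp only [Nat.cast_add, Nat.cast_one, Nat.cast_choose_eq_descPochhammer_div,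
    descPochhammer_succ_eval, descPochhammer_zero, Polynomial.eval_one, Nat.factorial]
  push_cast
  ring

theorem gap_sum_choose_four_binomial (a : ℕ → ℕ) (ha : ∀ n, a n = Nat.choose (n + 3) 4)
    (S : ℕ → ℕ)
    (hS : ∀ n, S n = ∑ j ∈ Finset.Icc 1 (a (n + 1) - a n - 1), (a n + j)) :
    ∀ n, S n = 9 * Nat.choose (n + 4) 5 + 36 * Nat.choose (n + 4) 6 +
      34 * Nat.choose (n + 4) 7 + Nat.choose (n + 3) 7 := by
  intro n
  have han : a n = (n + 3).choose 4 := ha n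
  have han' : a (n + 1) = (n + 4).choose 4 := ha (n + 1)
  have hgap := sum_Icc_sub_sub_one_add_add_choose_two (choose_four_lt_choose_four_succ n)
  rw [hS, han', han]
  have hpoly := choose_two_choose_four_succ n
  omega
end
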